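/- Let Alt_1 be the logic of all pointed frames in which every world has at most one R-successor. Let σ be a signature, τ ⊆ σ, and φ ∈ ML(σ) of modal depth n. For i ∈ ℕ define tr_i : ML(σ) → PL(σ×ℕ) by tr_i(p) = p_i (where p_j denotes the atom (p,j)), tr_i commutes with ¬ and ∧, tr_0(□χ) = ⊤, and tr_i(□χ) = tr_{i-1}(χ) for i > 0. Suppose that for each 0 ≤ i ≤ n, ψ_i is a uniform propositional (τ×{0,…,i})-interpolant for tr_i(φ). Then the modal formula ψ := ⋀_{0≤i≤n-1} (◇^i□⊥ → ψ_i[p_j ↦ ◇^{i-j} p]) ∧ (◇^n⊤ → ψ_n[p_j ↦ ◇^{n-j} p]) is a uniform Alt_1(τ)-interpolant for φ, where ψ_i[p_j ↦ ◇^{i-j} p] is the result of substituting, for each atom p_j occurring in ψ_i, the modal formula ◇^{i-j} p. -/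

import Mathlib

inductive MForm (α : Type) : Type
  | top : MForm α
  | atom : α → MForm α
  | neg : MForm α → MForm α
  | and : MForm α → MForm α → MForm α
  | box : MForm α → MForm α
deriving DecidableEq

namespace MForm

def imp {α : Type} (φ ψ : MForm α) : MForm α := neg (and φ (neg ψ))

def dia {α : Type} (φ : MForm α) : MForm α := neg (box (neg φ))

def sig {α : Type} [DecidableEq α] : MForm α → Finset α
  | top => ∅
  | atom p => {p}
  | neg φ => sig φ
  | and φ ψ => sig φ ∪ sig ψ
  | box φ => sig φ

def IsProp {α : Type} : MForm α → Prop
  | top => True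
  | atom _ => True
  | neg φ => IsProp φ
  | and φ ψ => IsProp φ ∧ IsProp ψ
  | box _ => False

def subf {α : Type} [DecidableEq α] : MForm α → Finset (MForm α)
  | top => {top}
  | atom p => {atom p}
  | neg φ => insert (neg φ) (subf φ)
  | and φ ψ => insert (and φ ψ) (subf φ ∪ subf ψ)
  | box φ => insert (box φ) (subf φ)

/-- The dag-size of a formula: the number of its distinct subformulas. -/
def dagSize {α : Type} [DecidableEq α] (φ : MForm α) : ℕ := (subf φ).card

end MForm

def psat {α : Type} (v : α → Prop) : MForm α → Prop
  | .top => True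
  | .atom p => v p
  | .neg φ => ¬ psat v φ
  | .and φ ψ => psat v φ ∧ psat v ψ
  | .box _ => True

/-- Propositional tautology. -/
def PTaut {α : Type} (φ : MForm α) : Prop := ∀ v : α → Prop, psat v φ

def bigAnd {α : Type} : List (MForm α) → MForm α
  | [] => .top
  | φ :: l => .and φ (bigAnd l)

def bigOr {α : Type} (l : List (MForm α)) : MForm α := .neg (bigAnd (l.map .neg))

def boxIter {α : Type} : ℕ → MForm α → MForm α
  | 0, φ => φ
  | n + 1, φ => .box (boxIter n φ)

def diaIter {α : Type} : ℕ → MForm α → MForm α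
  | 0, φ => φ
  | n + 1, φ => MForm.dia (diaIter n φ)

/-- `□^{≤n} φ`. -/
def ble {α : Type} (n : ℕ) (φ : MForm α) : MForm α :=
  bigAnd ((List.range (n + 1)).map (fun k => boxIter k φ))

/-- `◇^{≤n} φ`. -/
def dle {α : Type} (n : ℕ) (φ : MForm α) : MForm α := .neg (ble n (.neg φ))

def substAtoms {α β : Type} (s : α → MForm β) : MForm α → MForm β
  | .top => .top
  | .atom a => s a
  | .neg φ => .neg (substAtoms s φ)
  | .and φ ψ => .and (substAtoms s φ) (substAtoms s ψ)
  | .box φ => .box (substAtoms s φ)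

structure Frame where
  W : Type
  ne : Nonempty W
  R : W → W → Prop

structure PFrame extends Frame where
  pt : W

def sat (F : Frame) (V : F.W → ℕ → Prop) : F.W → MForm ℕ → Prop
  | w, .top => True
  | w, .atom p => V w p
  | w, .neg φ => ¬ sat F V w φ
  | w, .and φ ψ => sat F V w φ ∧ sat F V w ψ
  | w, .box φ => ∀ v, F.R w v → sat F V v φ

def validAt (F : Frame) (w : F.W) (φ : MForm ℕ) : Prop := ∀ V, sat F V w φ

def Log (𝓕 : Set PFrame) : Set (MForm ℕ) := {φ | ∀ P ∈ 𝓕, validAt P.toFrame P.pt φ}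

def Rooted (F : Frame) (w : F.W) : Prop := ∀ v, Relation.ReflTransGen F.R w v

def StrImp (L : Set (MForm ℕ)) (σ : Finset ℕ) (φ χ : MForm ℕ) : Prop :=
  χ.sig ⊆ σ ∧ φ.imp χ ∈ L ∧
    ∀ ψ : MForm ℕ, ψ.sig ⊆ σ → φ.imp ψ ∈ L → χ.imp ψ ∈ L

def UnifInt (L : Set (MForm ℕ)) (σ : Finset ℕ) (φ χ : MForm ℕ) : Prop :=
  χ.sig ⊆ σ ∧ φ.imp χ ∈ L ∧
    ∀ ψ : MForm ℕ, ψ.sig ∩ φ.sig ⊆ σ → φ.imp ψ ∈ L → χ.imp ψ ∈ L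

def CraigInt (L : Set (MForm ℕ)) (φ ψ χ : MForm ℕ) : Prop :=
  φ.imp χ ∈ L ∧ χ.imp ψ ∈ L ∧ χ.sig ⊆ φ.sig ∩ ψ.sig

def HasCIP (L : Set (MForm ℕ)) : Prop :=
  ∀ φ ψ : MForm ℕ, φ.imp ψ ∈ L → ∃ χ, CraigInt L φ ψ χ

def IsBisim (σ : Finset ℕ) (F₁ : Frame) (V₁ : F₁.W → ℕ → Prop)
    (F₂ : Frame) (V₂ : F₂.W → ℕ → Prop) (Z : F₁.W → F₂.W → Prop) : Prop :=
  (∀ w₁ w₂, Z w₁ w₂ → ∀ p ∈ σ, (V₁ w₁ p ↔ V₂ w₂ p)) ∧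
  (∀ w₁ w₂ v₁, Z w₁ w₂ → F₁.R w₁ v₁ → ∃ v₂, F₂.R w₂ v₂ ∧ Z v₁ v₂) ∧
  (∀ w₁ w₂ v₂, Z w₁ w₂ → F₂.R w₂ v₂ → ∃ v₁, F₁.R w₁ v₁ ∧ Z v₁ v₂)

def Bisim (σ : Finset ℕ) (F₁ : Frame) (V₁ : F₁.W → ℕ → Prop) (w₁ : F₁.W)
    (F₂ : Frame) (V₂ : F₂.W → ℕ → Prop) (w₂ : F₂.W) : Prop :=
  ∃ Z, IsBisim σ F₁ V₁ F₂ V₂ Z ∧ Z w₁ w₂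

def IsEME (σ : Finset ℕ) (Φ : Finset (MForm ℕ)) : Prop :=
  (∀ φ ∈ Φ, φ.IsProp ∧ φ.sig ⊆ σ) ∧
  (∀ v : ℕ → Prop, ∃ φ ∈ Φ, psat v φ) ∧
  (∀ φ ∈ Φ, ∀ ψ ∈ Φ, φ ≠ ψ → ∀ v : ℕ → Prop, ¬ (psat v φ ∧ psat v ψ))

def IsCover (σ : Finset ℕ) (Φ : Finset (MForm ℕ)) (F : Frame) (V : F.W → ℕ → Prop) : Prop :=
  ∀ φ ∈ Φ, ∀ w₁ w₂, sat F V w₁ φ → sat F V w₂ φ →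
    ∀ χ : MForm ℕ, χ.IsProp → χ.sig ⊆ σ → (sat F V w₁ χ ↔ sat F V w₂ χ)

noncomputable def coverFml (σ : Finset ℕ) (Φ : Finset (MForm ℕ)) (N : ℕ) : MForm ℕ :=
  bigAnd (Φ.toList.map (fun φ => bigAnd (σ.toList.map (fun p =>
    MForm.imp (dle N (.and φ (.atom p))) (ble N (MForm.imp φ (.atom p)))))))

/-- Alt₁: the logic of all pointed frames in which every world has at most one successor. -/
def Alt1 : Set (MForm ℕ) :=
  {φ | ∀ F : Frame, (∀ w v v' : F.W, F.R w v → F.R w v' → v = v') →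
    ∀ w : F.W, validAt F w φ}

/-- The modal depth of a formula. -/
def MForm.depth {α : Type} : MForm α → ℕ
  | .top => 0
  | .atom _ => 0
  | .neg φ => depth φ
  | .and φ ψ => max (depth φ) (depth ψ)
  | .box φ => depth φ + 1

/-- The translations `tr_i : ML(σ) → PL(σ×ℕ)` for Alt₁: `tr_i(p) = p_i`, commuting with
`¬` and `∧`, `tr_0(□χ) = ⊤` and `tr_i(□χ) = tr_{i-1}(χ)` for `i > 0`. -/
def trAlt : ℕ → MForm ℕ → MForm (ℕ × ℕ)
  | _, .top => .top
  | i, .atom p => .atom (p, i)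
  | i, .neg φ => .neg (trAlt i φ)
  | i, .and φ ψ => .and (trAlt i φ) (trAlt i ψ)
  | 0, .box _ => .top
  | i + 1, .box φ => trAlt i φ

/-- Uniform propositional `σ'`-interpolant. -/
def UPropInt {β : Type} [DecidableEq β] (σ' : Finset β) (χ ξ : MForm β) : Prop :=
  ξ.IsProp ∧ ξ.sig ⊆ σ' ∧ PTaut (χ.imp ξ) ∧
    ∀ ψ : MForm β, ψ.IsProp → ψ.sig ∩ χ.sig ⊆ σ' → PTaut (χ.imp ψ) → PTaut (ξ.imp ψ)

/-- `ψ_i[p_j ↦ ◇^{i-j} p]`. -/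
def backSub (i : ℕ) (ψ : MForm (ℕ × ℕ)) : MForm ℕ :=
  substAtoms (fun pj => diaIter (i - pj.2) (.atom pj.1)) ψ

/-- The candidate uniform Alt₁(τ)-interpolant built from the propositional uniform
interpolants `Ψ 0, …, Ψ n`:
`⋀_{0≤i≤n-1} (◇^i□⊥ → Ψ_i[p_j ↦ ◇^{i-j} p]) ∧ (◇^n⊤ → Ψ_n[p_j ↦ ◇^{n-j} p])`. -/
def altInterpolant (n : ℕ) (Ψ : ℕ → MForm (ℕ × ℕ)) : MForm ℕ :=
  .and
    (bigAnd ((List.range n).map (fun i =>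
      MForm.imp (diaIter i (.box (.neg .top))) (backSub i (Ψ i)))))
    (MForm.imp (diaIter n .top) (backSub n (Ψ n)))

/-! In an Alt₁-frame the worlds reachable from `w` form a single path `w = u₀ → u₁ → ⋯`.
If this path stops at `uₘ`, or runs for at least the modal depth of `α`, then `α` holds at `u₀`
iff `trₘ(α)` holds under the valuation `p_j ↦ V(u_{m-j}, p)`. So the `i`-th conjunct of the
interpolant says that `Ψ_i` holds along the path, and `φ → ψ` follows. Conversely, let `Ψ_i` hold
along the path and `φ → χ` be valid with `sig χ ∩ sig φ ⊆ τ`. By uniformity of `Ψ_i` some model of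
`tr_i(φ)` agrees with the path on the atoms of `χ`; realised on a fresh finite path it satisfies
`φ`, hence `χ`, and `χ` transfers back to `w` because both paths agree on `sig χ`. -/

section Propositional

variable {β : Type}

@[simp] lemma psat_imp {v : β → Prop} {φ ψ : MForm β} :
    psat v (φ.imp ψ) ↔ (psat v φ → psat v ψ) := by
  simp only [MForm.imp, psat]; tauto

@[simp] lemma psat_bigAnd {v : β → Prop} {l : List (MForm β)} :
    psat v (bigAnd l) ↔ ∀ φ ∈ l, psat v φ := by
  induction l with
  | nil => simp [bigAnd, psat]
  | cons a l ih => simp [bigAnd, psat, ih]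

lemma psat_congr [DecidableEq β] {v v' : β → Prop} {φ : MForm β}
    (h : ∀ a ∈ φ.sig, v a ↔ v' a) : psat v φ ↔ psat v' φ := by
  induction φ with
  | top | box => rfl
  | atom p => exact h p (by simp [MForm.sig])
  | neg φ ih => exact not_congr (ih h)
  | and φ ψ ih₁ ih₂ =>
    exact and_congr (ih₁ fun a ha => h a (Finset.mem_union_left _ ha))
      (ih₂ fun a ha => h a (Finset.mem_union_right _ ha))

lemma isProp_bigAnd {l : List (MForm β)} (h : ∀ φ ∈ l, φ.IsProp) : (bigAnd l).IsProp := by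
  induction l with
  | nil => trivial
  | cons a l ih => exact ⟨h a (by simp), ih fun φ hφ => h φ (by simp [hφ])⟩

lemma sig_bigAnd_subset [DecidableEq β] {l : List (MForm β)} {t : Finset β}
    (h : ∀ φ ∈ l, φ.sig ⊆ t) : (bigAnd l).sig ⊆ t := by
  induction l with
  | nil => simp [bigAnd, MForm.sig]
  | cons a l ih =>
    exact Finset.union_subset (h a (by simp)) (ih fun φ hφ => h φ (by simp [hφ]))

noncomputable def diagram (S : Finset β) (v : β → Prop) : MForm β :=
  open Classical in
  bigAnd (S.toList.map fun a => if v a then .atom a else .neg (.atom a))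

lemma isProp_diagram (S : Finset β) (v : β → Prop) : (diagram S v).IsProp := by
  classical
  refine isProp_bigAnd fun φ hφ => ?_
  obtain ⟨a, -, rfl⟩ := List.mem_map.1 hφ
  split_ifs <;> trivial

lemma sig_diagram_subset [DecidableEq β] (S : Finset β) (v : β → Prop) :
    (diagram S v).sig ⊆ S := by
  classical
  refine sig_bigAnd_subset fun φ hφ => ?_
  obtain ⟨a, ha, rfl⟩ := List.mem_map.1 hφ
  split_ifs <;> simpa [MForm.sig] using ha

lemma psat_diagram {S : Finset β} {v v' : β → Prop} :
    psat v' (diagram S v) ↔ ∀ a ∈ S, (v' a ↔ v a) := by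
  classical
  simp only [diagram, psat_bigAnd, List.mem_map, Finset.mem_toList]
  refine ⟨fun h a ha => ?_, ?_⟩
  · have := h _ ⟨a, ha, rfl⟩
    split_ifs at this with hva <;> simp_all [psat]
  · rintro h _ ⟨a, ha, rfl⟩
    have := h a ha
    split_ifs with hva <;> simp_all [psat]

lemma UPropInt.exists_psat_agree [DecidableEq β] {σ' : Finset β} {χ ξ : MForm β}
    (h : UPropInt σ' χ ξ) {S : Finset β} (hS : S ∩ χ.sig ⊆ σ') {v : β → Prop}
    (hv : psat v ξ) : ∃ v', psat v' χ ∧ ∀ a ∈ S, (v' a ↔ v a) := by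
  by_contra hne
  have hχ : PTaut (χ.imp (.neg (diagram S v))) := fun v' =>
    psat_imp.2 fun hv' hd => hne ⟨v', hv', psat_diagram.1 hd⟩
  have hsig : (MForm.neg (diagram S v)).sig ∩ χ.sig ⊆ σ' :=
    (Finset.inter_subset_inter_right (sig_diagram_subset S v)).trans hS
  exact psat_imp.1 (h.2.2.2 (.neg _) (isProp_diagram S v) hsig hχ v) hv
    (psat_diagram.2 fun _ _ => Iff.rfl)

end Propositional

namespace Frame

variable (F : Frame)

def IsAlt1 : Prop := ∀ w v v' : F.W, F.R w v → F.R w v' → v = v'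

def IsChain (u : ℕ → F.W) (m : ℕ) : Prop := ∀ k < m, F.R (u k) (u (k + 1))

def IsDead (w : F.W) : Prop := ∀ v, ¬ F.R w v

variable {F}

lemma isChain_zero (u : ℕ → F.W) : F.IsChain u 0 := fun _ h => absurd h (Nat.not_lt_zero _)

lemma IsChain.cons {w : F.W} {u : ℕ → F.W} {m : ℕ} (hw : F.R w (u 0)) (hu : F.IsChain u m) :
    F.IsChain (fun k => Nat.casesOn k w u) (m + 1)
  | 0, _ => hw
  | k + 1, hk => hu k (by omega)

lemma IsChain.mono {u : ℕ → F.W} {m m' : ℕ} (hu : F.IsChain u m) (h : m' ≤ m) :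
    F.IsChain u m' := fun k hk => hu k (hk.trans_le h)

lemma IsChain.eq_of_isAlt1 (hF : F.IsAlt1) {u u' : ℕ → F.W} {m : ℕ} (hu : F.IsChain u m)
    (hu' : F.IsChain u' m) (h₀ : u 0 = u' 0) : ∀ k ≤ m, u k = u' k
  | 0, _ => h₀
  | k + 1, hk => by
    have ih := hu.eq_of_isAlt1 hF hu' h₀ k (by omega)
    exact hF _ _ _ (hu k hk) (ih ▸ hu' k hk)

lemma exists_isChain_isDead_or_eq (w : F.W) (N : ℕ) :
    ∃ (u : ℕ → F.W) (m : ℕ), u 0 = w ∧ m ≤ N ∧ F.IsChain u m ∧ (F.IsDead (u m) ∨ m = N) := by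
  induction N generalizing w with
  | zero => exact ⟨fun _ => w, 0, rfl, le_rfl, isChain_zero _, Or.inr rfl⟩
  | succ N ih =>
    by_cases hw : F.IsDead w
    · exact ⟨fun _ => w, 0, rfl, Nat.zero_le _, isChain_zero _, Or.inl hw⟩
    obtain ⟨x, hx⟩ : ∃ x, F.R w x := by simpa [IsDead] using hw
    obtain ⟨u, m, rfl, hm, hu, hend⟩ := ih x
    exact ⟨_, m + 1, rfl, by omega, hu.cons hx, hend.imp id (by omega)⟩

end Frame

section Kripke

variable {F : Frame} {V : F.W → ℕ → Prop}

@[simp] lemma sat_imp {w : F.W} {φ ψ : MForm ℕ} :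
    sat F V w (φ.imp ψ) ↔ (sat F V w φ → sat F V w ψ) := by
  simp only [MForm.imp, sat]; tauto

@[simp] lemma sat_bigAnd {w : F.W} {l : List (MForm ℕ)} :
    sat F V w (bigAnd l) ↔ ∀ φ ∈ l, sat F V w φ := by
  induction l with
  | nil => simp [bigAnd, sat]
  | cons a l ih => simp [bigAnd, sat, ih]

lemma sat_box_neg_top {w : F.W} : sat F V w (.box (.neg .top)) ↔ F.IsDead w := by
  simp [sat, Frame.IsDead]

lemma sat_diaIter_iff_exists {w : F.W} {t : ℕ} {φ : MForm ℕ} :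
    sat F V w (diaIter t φ) ↔ ∃ u : ℕ → F.W, u 0 = w ∧ F.IsChain u t ∧ sat F V (u t) φ := by
  induction t generalizing w with
  | zero => exact ⟨fun h => ⟨fun _ => w, rfl, Frame.isChain_zero _, h⟩, fun ⟨u, hu, _, h⟩ => hu ▸ h⟩
  | succ t ih =>
    simp only [diaIter, MForm.dia, sat, not_forall, not_not, exists_prop, ih]
    constructor
    · rintro ⟨x, hx, u, rfl, hu, h⟩
      exact ⟨_, rfl, hu.cons hx, h⟩
    · rintro ⟨u, rfl, hu, h⟩
      exact ⟨u 1, hu 0 (by omega), fun k => u (k + 1), rfl, fun k hk => hu (k + 1) (by omega), h⟩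

lemma sat_diaIter_iff_of_isChain (hF : F.IsAlt1) {u : ℕ → F.W} {t : ℕ} (hu : F.IsChain u t)
    {φ : MForm ℕ} : sat F V (u 0) (diaIter t φ) ↔ sat F V (u t) φ := by
  rw [sat_diaIter_iff_exists]
  refine ⟨fun ⟨u', h₀, hu', h⟩ => ?_, fun h => ⟨u, rfl, hu, h⟩⟩
  rwa [hu'.eq_of_isAlt1 hF hu h₀ t le_rfl] at h

end Kripke

section Translation

variable {F : Frame} {V : F.W → ℕ → Prop}

lemma sig_trAlt_subset (φ : MForm ℕ) (i : ℕ) : (trAlt i φ).sig ⊆ φ.sig ×ˢ Finset.range (i + 1) := by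
  induction φ generalizing i with
  | top => simp [trAlt, MForm.sig]
  | atom p => simp [trAlt, MForm.sig]
  | neg φ ih => exact ih i
  | and φ ψ ih₁ ih₂ =>
    exact Finset.union_subset
      ((ih₁ i).trans (Finset.product_subset_product_left Finset.subset_union_left))
      ((ih₂ i).trans (Finset.product_subset_product_left Finset.subset_union_right))
  | box φ ih =>
    cases i with
    | zero => simp [trAlt, MForm.sig]
    | succ i => exact (ih i).trans (Finset.product_subset_product_right (by simp))

def pathValuation (V : F.W → ℕ → Prop) (u : ℕ → F.W) (m : ℕ) : ℕ × ℕ → Prop :=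
  fun pj => V (u (m - pj.2)) pj.1

lemma sat_iff_psat_trAlt_of_le (hF : F.IsAlt1) {u : ℕ → F.W} {m : ℕ} (hu : F.IsChain u m)
    (φ : MForm ℕ) {k : ℕ} (hk : k ≤ m) (hend : F.IsDead (u m) ∨ φ.depth ≤ m - k) :
    sat F V (u k) φ ↔ psat (pathValuation V u m) (trAlt (m - k) φ) := by
  induction φ generalizing k with
  | top => simp [sat, trAlt, psat]
  | atom p => simp only [sat, trAlt, psat, pathValuation, Nat.sub_sub_self hk]
  | neg φ ih => exact not_congr (ih hk hend)
  | and φ ψ ih₁ ih₂ =>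
    simp only [MForm.depth, max_le_iff] at hend
    exact and_congr (ih₁ hk (hend.imp_right And.left)) (ih₂ hk (hend.imp_right And.right))
  | box φ ih =>
    simp only [MForm.depth] at hend
    obtain rfl | hlt := hk.eq_or_lt
    · have hdead : F.IsDead (u k) := hend.resolve_right (by omega)
      simp only [Nat.sub_self, trAlt, psat, iff_true]
      exact fun v hv => absurd hv (hdead v)
    · obtain ⟨l, hl⟩ : ∃ l, m - k = l + 1 := ⟨m - (k + 1), by omega⟩
      have hstep : m - (k + 1) = l := by omega
      rw [hl, trAlt, ← hstep, ← ih hlt (hend.imp_right (by omega))]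
      exact ⟨fun h => h _ (hu k hlt), fun h v hv => hF _ _ _ (hu k hlt) hv ▸ h⟩

lemma sat_iff_psat_trAlt (hF : F.IsAlt1) {u : ℕ → F.W} {m : ℕ} (hu : F.IsChain u m)
    {φ : MForm ℕ} (hend : F.IsDead (u m) ∨ φ.depth ≤ m) :
    sat F V (u 0) φ ↔ psat (pathValuation V u m) (trAlt m φ) :=
  sat_iff_psat_trAlt_of_le hF hu φ (Nat.zero_le m) hend

lemma sat_substAtoms_iff {α : Type} {s : α → MForm ℕ} {w : F.W} {ψ : MForm α}
    (hψ : ψ.IsProp) : sat F V w (substAtoms s ψ) ↔ psat (fun a => sat F V w (s a)) ψ := by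
  induction ψ with
  | top | atom => rfl
  | neg ψ ih => exact not_congr (ih hψ)
  | and ψ₁ ψ₂ ih₁ ih₂ => exact and_congr (ih₁ hψ.1) (ih₂ hψ.2)
  | box => exact hψ.elim

lemma sat_backSub_iff (hF : F.IsAlt1) {u : ℕ → F.W} {i : ℕ} (hu : F.IsChain u i)
    {ψ : MForm (ℕ × ℕ)} (hψ : ψ.IsProp) :
    sat F V (u 0) (backSub i ψ) ↔ psat (pathValuation V u i) ψ := by
  rw [backSub, sat_substAtoms_iff hψ]
  exact psat_congr fun a _ =>
    sat_diaIter_iff_of_isChain hF (hu.mono (Nat.sub_le i a.2))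

lemma sig_diaIter (k : ℕ) (φ : MForm ℕ) : (diaIter k φ).sig = φ.sig := by
  induction k with
  | zero => rfl
  | succ k ih => exact ih

lemma sig_backSub_subset (i : ℕ) (ψ : MForm (ℕ × ℕ)) :
    (backSub i ψ).sig ⊆ ψ.sig.image Prod.fst := by
  induction ψ with
  | top => simp [backSub, substAtoms, MForm.sig]
  | atom a => simp [backSub, substAtoms, sig_diaIter, MForm.sig]
  | neg ψ ih => exact ih
  | box ψ ih => exact ih
  | and ψ₁ ψ₂ ih₁ ih₂ =>
    rw [MForm.sig, Finset.image_union]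
    exact Finset.union_subset_union ih₁ ih₂

end Translation

def pathFrame (m : ℕ) : Frame where
  W := ℕ
  ne := ⟨0⟩
  R a b := a < m ∧ b = a + 1

lemma pathFrame_isAlt1 (m : ℕ) : (pathFrame m).IsAlt1 :=
  fun _ _ _ h h' => h.2.trans h'.2.symm

lemma pathFrame_isChain {m : ℕ} : (pathFrame m).IsChain id m :=
  fun _ hk => ⟨hk, rfl⟩

lemma pathFrame_isDead (m : ℕ) : (pathFrame m).IsDead m :=
  fun _ h => lt_irrefl m h.1

section Interpolant

variable {τ : Finset ℕ} {φ : MForm ℕ} {i : ℕ} {ξ : MForm (ℕ × ℕ)}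
  {F : Frame} {V : F.W → ℕ → Prop}

lemma sat_backSub_of_sat (hξ : UPropInt (τ ×ˢ Finset.range (i + 1)) (trAlt i φ) ξ)
    (hF : F.IsAlt1) {u : ℕ → F.W} (hu : F.IsChain u i) (hend : F.IsDead (u i) ∨ φ.depth ≤ i)
    (hφ : sat F V (u 0) φ) : sat F V (u 0) (backSub i ξ) :=
  (sat_backSub_iff hF hu hξ.1).2 <|
    psat_imp.1 (hξ.2.2.1 _) ((sat_iff_psat_trAlt hF hu hend).1 hφ)

lemma sat_of_sat_backSub (hξ : UPropInt (τ ×ˢ Finset.range (i + 1)) (trAlt i φ) ξ)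
    {χ : MForm ℕ} (hχ : χ.sig ∩ φ.sig ⊆ τ) (hφχ : φ.imp χ ∈ Alt1)
    (hF : F.IsAlt1) {u : ℕ → F.W} {m : ℕ} (hu : F.IsChain u m) (him : i ≤ m)
    (hφi : i = m ∨ φ.depth ≤ i) (hχm : F.IsDead (u m) ∨ χ.depth ≤ m)
    (h : sat F V (u 0) (backSub i ξ)) : sat F V (u 0) χ := by
  have hv := (sat_backSub_iff hF (hu.mono him) hξ.1).1 h
  have hS : χ.sig ×ˢ Finset.range (i + 1) ∩ (trAlt i φ).sig ⊆ τ ×ˢ Finset.range (i + 1) := by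
    intro a ha
    obtain ⟨haχ, haφ⟩ := Finset.mem_inter.1 ha
    obtain ⟨hpχ, hj⟩ := Finset.mem_product.1 haχ
    have hpφ := (Finset.mem_product.1 (sig_trAlt_subset φ i haφ)).1
    exact Finset.mem_product.2 ⟨hχ (Finset.mem_inter.2 ⟨hpχ, hpφ⟩), hj⟩
  obtain ⟨v', hv'φ, hv'χ⟩ := hξ.exists_psat_agree hS hv
  -- A fresh path is needed: the worlds `u k` need not be distinct.
  open Classical in
  let V' : ℕ → ℕ → Prop := fun k p => if k ≤ i then v' (p, i - k) else V (u k) p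
  have hφ' : sat (pathFrame m) V' (0 : ℕ) φ := by
    refine (sat_iff_psat_trAlt (u := id) (pathFrame_isAlt1 m) (pathFrame_isChain.mono him)
      (hφi.imp_left (by rintro rfl; exact pathFrame_isDead i))).2 ?_
    refine (psat_congr fun a ha => ?_).2 hv'φ
    have hj := Finset.mem_range.1 (Finset.mem_product.1 (sig_trAlt_subset φ i ha)).2
    simp only [pathValuation, id, V', if_pos (Nat.sub_le i a.2),
      Nat.sub_sub_self (by omega : a.2 ≤ i)]
  have hχ' := sat_imp.1 (hφχ _ (pathFrame_isAlt1 m) (0 : ℕ) V') hφ'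
  replace hχ' := (sat_iff_psat_trAlt (u := id) (pathFrame_isAlt1 m) pathFrame_isChain
    (Or.inl (pathFrame_isDead m))).1 hχ'
  refine (sat_iff_psat_trAlt hF hu hχm).2 ((psat_congr fun a ha => ?_).1 hχ')
  have hp := (Finset.mem_product.1 (sig_trAlt_subset χ m ha)).1
  simp only [pathValuation, id, V']
  split_ifs with hk
  · have := hv'χ (a.1, i - (m - a.2)) (Finset.mem_product.2 ⟨hp, Finset.mem_range.2 (by omega)⟩)
    rwa [pathValuation, Nat.sub_sub_self hk] at this
  · rfl

end Interpolant

lemma sig_altInterpolant_subset {τ : Finset ℕ} {n : ℕ} {Ψ : ℕ → MForm (ℕ × ℕ)}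
    (h : ∀ i ≤ n, ∀ a ∈ (Ψ i).sig, a.1 ∈ τ) : (altInterpolant n Ψ).sig ⊆ τ := by
  have hback : ∀ i ≤ n, (backSub i (Ψ i)).sig ⊆ τ := fun i hi =>
    (sig_backSub_subset i (Ψ i)).trans fun p hp => by
      obtain ⟨a, ha, rfl⟩ := Finset.mem_image.1 hp
      exact h i hi a ha
  refine Finset.union_subset (sig_bigAnd_subset fun θ hθ => ?_) ?_
  · obtain ⟨i, hi, rfl⟩ := List.mem_map.1 hθ
    simpa [MForm.imp, MForm.sig, sig_diaIter] using hback i (List.mem_range.1 hi).le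
  · simpa [MForm.imp, MForm.sig, sig_diaIter] using hback n le_rfl

lemma sat_altInterpolant_iff {F : Frame} {V : F.W → ℕ → Prop} {w : F.W} {n : ℕ}
    {Ψ : ℕ → MForm (ℕ × ℕ)} : sat F V w (altInterpolant n Ψ) ↔
      (∀ i < n, sat F V w (diaIter i (.box (.neg .top))) → sat F V w (backSub i (Ψ i))) ∧
      (sat F V w (diaIter n .top) → sat F V w (backSub n (Ψ n))) := by
  simp [altInterpolant, sat]

theorem stmt19_general (τ : Finset ℕ)
    (φ : MForm ℕ) (n : ℕ) (hn : φ.depth = n)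
    (Ψ : ℕ → MForm (ℕ × ℕ))
    (hΨ : ∀ i ≤ n, UPropInt (τ ×ˢ Finset.range (i + 1)) (trAlt i φ) (Ψ i)) :
    UnifInt Alt1 τ φ (altInterpolant n Ψ) := by
  refine ⟨sig_altInterpolant_subset fun i hi a ha => (Finset.mem_product.1 ((hΨ i hi).2.1 ha)).1,
    fun F hF w V => ?_, fun χ hχ hφχ F hF w V => ?_⟩
  · rw [sat_imp, sat_altInterpolant_iff]
    refine fun hφ => ⟨fun i hi hshort => ?_, fun hlong => ?_⟩
    · obtain ⟨u, rfl, hu, hdead⟩ := sat_diaIter_iff_exists.1 hshort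
      exact sat_backSub_of_sat (hΨ i hi.le) hF hu (Or.inl (sat_box_neg_top.1 hdead)) hφ
    · obtain ⟨u, rfl, hu, -⟩ := sat_diaIter_iff_exists.1 hlong
      exact sat_backSub_of_sat (hΨ n le_rfl) hF hu (Or.inr hn.le) hφ
  · rw [sat_imp, sat_altInterpolant_iff]
    rintro ⟨hshort, hlong⟩
    -- follow the path from `w` until it stops or is long enough to decide both `φ` and `χ`
    obtain ⟨u, m, rfl, -, hu, hend⟩ := F.exists_isChain_isDead_or_eq w (max n χ.depth)
    by_cases hmn : m < n
    · have hdead : F.IsDead (u m) := hend.resolve_right (by omega)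
      exact sat_of_sat_backSub (hΨ m hmn.le) hχ hφχ hF hu le_rfl (Or.inl rfl) (Or.inl hdead)
        (hshort m hmn (sat_diaIter_iff_exists.2 ⟨u, rfl, hu, sat_box_neg_top.2 hdead⟩))
    · exact sat_of_sat_backSub (hΨ n le_rfl) hχ hφχ hF hu (by omega) (Or.inr hn.le)
        (hend.imp_right (by omega))
        (hlong (sat_diaIter_iff_exists.2 ⟨u, rfl, hu.mono (by omega), trivial⟩))

/-- if `φ ∈ ML(σ)` has modal depth `n`, `τ ⊆ σ`, and for each `0 ≤ i ≤ n`
the formula `Ψ i` is a uniform propositional `(τ×{0,…,i})`-interpolant for `tr_i(φ)`, then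
`⋀_{0≤i≤n-1} (◇^i□⊥ → Ψ_i[p_j ↦ ◇^{i-j} p]) ∧ (◇^n⊤ → Ψ_n[p_j ↦ ◇^{n-j} p])`
is a uniform `Alt₁(τ)`-interpolant for `φ`. -/
theorem stmt19 (σ τ : Finset ℕ) (hτ : τ ⊆ σ)
    (φ : MForm ℕ) (hφ : φ.sig ⊆ σ) (n : ℕ) (hn : φ.depth = n)
    (Ψ : ℕ → MForm (ℕ × ℕ))
    (hΨ : ∀ i ≤ n, UPropInt (τ ×ˢ Finset.range (i + 1)) (trAlt i φ) (Ψ i)) :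
    UnifInt Alt1 τ φ (altInterpolant n Ψ) :=
  stmt19_general τ φ n hn Ψ hΨ
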